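/- For all real u, v > 0 with u ≠ 1, v ≠ 1 and uv ≠ 1, the integral D_{1,1}(u,v) := ∫₀^∞ x/((x u^{-1}+1)(x+1)(xv+1)) dx equals ((v-1)·log(1/u) − (1/u − 1)·log v) / ((1/u − 1)(v−1)(v − 1/u)). -/

import Mathlib

open MeasureTheory Real

open Filter Topology

/-!
Partial fractions: for distinct `a, b, c > 0` the integrand `x / ((x a + 1)(x b + 1)(x c + 1))` is
the derivative of a combination of `log (x a + 1)`, `log (x b + 1)`, `log (x c + 1)` whose
coefficients sum to zero. Hence the `log x` growth cancels at infinity, the antiderivative tends to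
the same combination of `log a`, `log b`, `log c`, and it vanishes at `0`. The theorem is the case
`a = 1/u`, `b = 1`, `c = v`.
-/

lemma hasDerivAt_log_mul_add_one {a x : ℝ} (h : x * a + 1 ≠ 0) :
    HasDerivAt (fun x => log (x * a + 1)) (a / (x * a + 1)) x := by
  simpa using (((hasDerivAt_id x).mul_const a).add_const 1).log h

lemma tendsto_log_mul_add_one_sub_log {a : ℝ} (ha : 0 < a) :
    Tendsto (fun x => log (x * a + 1) - log x) atTop (𝓝 (log a)) := by
  have h : Tendsto (fun x : ℝ => a + x⁻¹) atTop (𝓝 a) := by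
    simpa using tendsto_inv_atTop_zero.const_add a
  refine ((continuousAt_log ha.ne').tendsto.comp h).congr' ?_
  filter_upwards [eventually_gt_atTop 0] with x hx
  rw [Function.comp_apply, ← log_div (by positivity) hx.ne']
  field_simp

noncomputable def logAntideriv (a b c x : ℝ) : ℝ :=
  log (x * a + 1) / ((a - b) * (c - a)) + log (x * b + 1) / ((b - c) * (a - b)) +
    log (x * c + 1) / ((c - a) * (b - c))

section

variable {a b c : ℝ} (ha : 0 < a) (hb : 0 < b) (hc : 0 < c)
  (hab : a ≠ b) (hbc : b ≠ c) (hca : c ≠ a)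
include ha hb hc hab hbc hca

lemma hasDerivAt_logAntideriv {x : ℝ} (hx : 0 ≤ x) :
    HasDerivAt (logAntideriv a b c) (x / ((x * a + 1) * (x * b + 1) * (x * c + 1))) x := by
  have hxa : x * a + 1 ≠ 0 := by positivity
  have hxb : x * b + 1 ≠ 0 := by positivity
  have hxc : x * c + 1 ≠ 0 := by positivity
  have hab' := sub_ne_zero.2 hab
  have hbc' := sub_ne_zero.2 hbc
  have hca' := sub_ne_zero.2 hca
  refine ((((hasDerivAt_log_mul_add_one hxa).div_const _).add
    ((hasDerivAt_log_mul_add_one hxb).div_const _)).add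
    ((hasDerivAt_log_mul_add_one hxc).div_const _)).congr_deriv ?_
  field_simp
  ring

lemma tendsto_logAntideriv_atTop :
    Tendsto (logAntideriv a b c) atTop
      (𝓝 (log a / ((a - b) * (c - a)) + log b / ((b - c) * (a - b)) +
        log c / ((c - a) * (b - c)))) := by
  have hcoeff :
      1 / ((a - b) * (c - a)) + 1 / ((b - c) * (a - b)) + 1 / ((c - a) * (b - c)) = 0 := by
    have hab' := sub_ne_zero.2 hab
    have hbc' := sub_ne_zero.2 hbc
    have hca' := sub_ne_zero.2 hca
    field_simp
    ring
  refine ((((tendsto_log_mul_add_one_sub_log ha).div_const _).add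
    ((tendsto_log_mul_add_one_sub_log hb).div_const _)).add
    ((tendsto_log_mul_add_one_sub_log hc).div_const _)).congr fun x => ?_
  rw [logAntideriv]
  linear_combination -log x * hcoeff

theorem integral_Ioi_div_mul_add_one_mul_mul :
    ∫ x in Set.Ioi (0 : ℝ), x / ((x * a + 1) * (x * b + 1) * (x * c + 1)) =
      log a / ((a - b) * (c - a)) + log b / ((b - c) * (a - b)) +
        log c / ((c - a) * (b - c)) := by
  have hderiv := fun x (hx : x ∈ Set.Ioi (0 : ℝ)) =>
    hasDerivAt_logAntideriv ha hb hc hab hbc hca (le_of_lt hx)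
  have hcont : ContinuousWithinAt (logAntideriv a b c) (Set.Ici 0) 0 :=
    (hasDerivAt_logAntideriv ha hb hc hab hbc hca le_rfl).continuousAt.continuousWithinAt
  have hnonneg : ∀ x ∈ Set.Ioi (0 : ℝ), 0 ≤ x / ((x * a + 1) * (x * b + 1) * (x * c + 1)) :=
    fun x hx => by have : 0 < x := hx; positivity
  rw [integral_Ioi_of_hasDerivAt_of_nonneg hcont hderiv hnonneg
    (tendsto_logAntideriv_atTop ha hb hc hab hbc hca)]
  simp [logAntideriv]

end

theorem D_one_one_closed_form (u v : ℝ) (hu : 0 < u) (hv : 0 < v)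
    (hu1 : u ≠ 1) (hv1 : v ≠ 1) (huv : u * v ≠ 1) :
    ∫ x in Set.Ioi (0:ℝ), x / ((x * u⁻¹ + 1) * (x + 1) * (x * v + 1)) =
      ((v - 1) * Real.log (1 / u) - (1 / u - 1) * Real.log v) /
        ((1 / u - 1) * (v - 1) * (v - 1 / u)) := by
  have hu1' : u⁻¹ ≠ 1 := inv_ne_one.2 hu1
  have hvu : v ≠ u⁻¹ := fun h => huv (by rw [h, mul_inv_cancel₀ hu.ne'])
  have h := integral_Ioi_div_mul_add_one_mul_mul (inv_pos.2 hu) one_pos hv hu1' hv1.symm hvu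
  simp only [mul_one, log_one, zero_div, add_zero] at h
  rw [h, one_div]
  have hu1'' := sub_ne_zero.2 hu1'
  have hv1' := sub_ne_zero.2 hv1
  have hvu' := sub_ne_zero.2 hvu
  field_simp
  ring
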